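/- (i) For all terms t, u : T, g (h (g t u) u) u ≈ g t u. (ii) If a : A is an atom, then h (g a a) a is not ≈-equivalent to a. Consequently g is not right-cancellative modulo ≈: g s1 t ≈ g s2 t does not imply s1 ≈ s2. -/
import Mathlib


/-- Element-terms generated by atoms `A` and binary constructors `h`, `g`. -/
inductive T (A : Type*) : Type _
  | atom : A → T A
  | h : T A → T A → T A
  | g : T A → T A → T A

/-- The smallest congruence on `T A` containing `g (h x y) y ≈ x`,
i.e. equality modulo the collapsing rewrite rule `g(h(x,y), y) → x`. -/
inductive Eqv {A : Type*} : T A → T A → Prop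
  | collapse (x y : T A) : Eqv (T.g (T.h x y) y) x
  | refl (x : T A) : Eqv x x
  | symm {x y : T A} : Eqv x y → Eqv y x
  | trans {x y z : T A} : Eqv x y → Eqv y z → Eqv x z
  | hcong {x₁ x₂ y₁ y₂ : T A} : Eqv x₁ x₂ → Eqv y₁ y₂ → Eqv (T.h x₁ y₁) (T.h x₂ y₂)
  | gcong {x₁ x₂ y₁ y₂ : T A} : Eqv x₁ x₂ → Eqv y₁ y₂ → Eqv (T.g x₁ y₁) (T.g x₂ y₂)

attribute [local instance] Classical.propDecidable

/-- Normal form under the rewrite rule `g(h(x,y),y) → x`. -/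
noncomputable def nf {A : Type*} : T A → T A
  | T.atom a => T.atom a
  | T.h x y => T.h (nf x) (nf y)
  | T.g x y =>
    match nf x, nf y with
    | T.h u v, ny => if v = ny then u else T.g (T.h u v) ny
    | T.atom b, ny => T.g (T.atom b) ny
    | T.g u v, ny => T.g (T.g u v) ny

lemma nf_g {A : Type*} (x y : T A) :
    nf (T.g x y) =
      match nf x, nf y with
      | T.h u v, ny => if v = ny then u else T.g (T.h u v) ny
      | T.atom b, ny => T.g (T.atom b) ny
      | T.g u v, ny => T.g (T.g u v) ny := by
  rfl

lemma nf_eqv {A : Type*} {x y : T A} (h : Eqv x y) : nf x = nf y := by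
  induction h with
  | collapse x y => simp [nf]
  | refl x => rfl
  | symm _ ih => exact ih.symm
  | trans _ _ ih₁ ih₂ => exact ih₁.trans ih₂
  | hcong _ _ ih₁ ih₂ => simp [nf, ih₁, ih₂]
  | gcong _ _ ih₁ ih₂ => rw [nf_g, nf_g, ih₁, ih₂]

/-- (i) `g (h (g t u) u) u ≈ g t u`; (ii) `h (g a a) a ≉ a` for an atom `a`;
consequently `g` is not right-cancellative modulo `≈`. -/
theorem g_not_right_cancellative {A : Type*} (a : A) :
    (∀ t u : T A, Eqv (T.g (T.h (T.g t u) u) u) (T.g t u)) ∧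
    (¬ Eqv (T.h (T.g (T.atom a) (T.atom a)) (T.atom a)) (T.atom a)) ∧
    ¬ (∀ s1 s2 t : T A, Eqv (T.g s1 t) (T.g s2 t) → Eqv s1 s2) := by
  refine ⟨fun t u => Eqv.collapse _ _, fun hc => ?_, fun hrc => ?_⟩
  · have := nf_eqv hc
    simp [nf] at this
  · have h := hrc (T.h (T.g (T.atom a) (T.atom a)) (T.atom a)) (T.atom a) (T.atom a)
      (Eqv.collapse _ _)
    have := nf_eqv h
    simp [nf] at this
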